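/- arXiv:2510.22157 — 2 statements merged into one kernel-verified Lean document; each statement's English description precedes it below -/
import Mathlib

section
/- Suppose the entries g^{(n)}_i are i.i.d. Rademacher, fix i ∈ {1,…,d} with a_{i,…,i} ≠ 0, and let V = Σ_{(j_1,…,j_{N−1}) ∈ {1,…,d}^{N−1}} a²_{j_1,…,j_{N−1},i} − a²_{i,…,i}. Let y_i^{(1)}, …, y_i^{(K)} be K = r·s i.i.d. copies of y_i (obtained from K independent sets of the random variables g^{(n)}_i), partitioned into r disjoint groups of size s, and let M be the median of the r group means. Then for any ε > 0 and δ ∈ (0,1), if r ≥ 8·log(1/δ) and s ≥ 4·V/(ε² · a²_{i,…,i}) (in particular if K ≥ 32·V·log(1/δ)/(ε² · a²_{i,…,i})), then Pr(|M − a_{i,…,i}| ≤ ε·|a_{i,…,i}|) ≥ 1 − δ. -/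
open MeasureTheory ProbabilityTheory Finset

/-- The diagonal estimator: `y i = Σ_j a_{j_1,…,j_{N-1},i} ∏_t g^{(t)}_{j_t} g^{(t)}_i`,
where the tensor has order `N = M + 1`. -/
noncomputable def diagEstimator {M d : ℕ} (a : (Fin (M + 1) → Fin d) → ℝ)
    {Ω : Type*} (g : Fin M → Fin d → Ω → ℝ) (i : Fin d) (ω : Ω) : ℝ :=
  ∑ j : Fin M → Fin d, a (Fin.snoc j i) * ∏ t : Fin M, g t (j t) ω * g t i ω

/-- The Rademacher distribution: uniform on `{-1, +1}`. -/
noncomputable def radMeasure : Measure ℝ :=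
  (2 : ENNReal)⁻¹ • Measure.dirac 1 + (2 : ENNReal)⁻¹ • Measure.dirac (-1)

/-- The median of a finite family of reals (an element in position `(r-1)/2` of the
sorted list of values). -/
noncomputable def medianFn {r : ℕ} (v : Fin r → ℝ) : ℝ :=
  ((List.ofFn v).mergeSort (fun x y => x ≤ y)).getD ((r - 1) / 2) 0


/-!
Write `y_i = ∑_j a_{j,i} χ_j` with `χ_j = ∏_t g^{(t)}_{j_t} g^{(t)}_i`. For independent
Rademacher signs, `E[∏_c g_c ^ {e_c}]` is `1` if every exponent `e_c` is even and `0` otherwise;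
hence the `χ_j` are orthonormal and have mean `[j = (i, …, i)]`, so that `E y_i = a_{i…i}` and
`Var y_i = V`. The mean of a group of `s` independent copies has variance
`V / s ≤ ε² a_{i…i}² / 4`, so by Chebyshev's inequality it is off by more than `ε |a_{i…i}|` with
probability at most `1/4`. The median is off only if at least half of the `r` independent group
means are, and Hoeffding's inequality for the indicators of these events bounds that probability
by `exp (-r/8) ≤ δ`.
-/

section Rademacher

variable {Ω ι : Type*} [MeasurableSpace Ω] {P : Measure Ω} [Fintype ι] {X : ι → Ω → ℝ}

lemma integral_pow_radMeasure (n : ℕ) :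
    ∫ x, x ^ n ∂radMeasure = if Even n then 1 else 0 := by
  have hint (x : ℝ) :
      Integrable (fun y : ℝ => y ^ n) ((2 : ENNReal)⁻¹ • Measure.dirac x) :=
    (integrable_dirac enorm_lt_top).smul_measure (by simp)
  rw [radMeasure, integral_add_measure (hint _) (hint _), integral_smul_measure,
    integral_smul_measure, integral_dirac, integral_dirac]
  rcases Nat.even_or_odd n with h | h
  · norm_num [h, h.neg_pow]
  · simp [h.neg_pow, Nat.not_even_iff_odd.2 h]

lemma ae_abs_eq_one_of_map_eq_radMeasure {Y : Ω → ℝ} (hY : Measurable Y)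
    (h : P.map Y = radMeasure) : ∀ᵐ ω ∂P, |Y ω| = 1 := by
  have : ∀ᵐ x ∂radMeasure, |x| = 1 :=
    ae_add_measure_iff.2
      ⟨Measure.ae_smul_measure (by simp) _, Measure.ae_smul_measure (by simp) _⟩
  rw [← h] at this
  exact ae_of_ae_map hY.aemeasurable this

lemma memLp_prod_pow [IsFiniteMeasure P] (hm : ∀ c, Measurable (X c))
    (hlaw : ∀ c, P.map (X c) = radMeasure) (e : ι → ℕ) (p : ENNReal) :
    MemLp (fun ω => ∏ c, X c ω ^ e c) p P := by
  refine MemLp.of_bound (by fun_prop) 1 ?_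
  filter_upwards [ae_all_iff.2 fun c => ae_abs_eq_one_of_map_eq_radMeasure (hm c) (hlaw c)]
    with ω hω
  simp [hω]

lemma integral_prod_pow (hX : iIndepFun X P) (hm : ∀ c, Measurable (X c))
    (hlaw : ∀ c, P.map (X c) = radMeasure) (e : ι → ℕ) :
    ∫ ω, ∏ c, X c ω ^ e c ∂P = if ∀ c, Even (e c) then 1 else 0 := by
  have hmoment (c : ι) : ∫ ω, X c ω ^ e c ∂P = if Even (e c) then 1 else 0 := by
    rw [← integral_pow_radMeasure, ← hlaw c, integral_map (hm c).aemeasurable (by fun_prop)]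
  rw [hX.integral_fun_prod_comp (f := fun c x => x ^ e c) (fun c => (hm c).aemeasurable)
    fun c => by fun_prop]
  simp_rw [hmoment, Finset.prod_boole, Finset.mem_univ, true_imp_iff]

end Rademacher

lemma ProbabilityTheory.iIndepFun.curry {Ω ι κ β : Type*} [MeasurableSpace Ω]
    {P : Measure Ω} [MeasurableSpace β] {X : ι × κ → Ω → β} (hX : iIndepFun X P)
    (hm : ∀ p, Measurable (X p)) :
    iIndepFun (fun i ω j => X (i, j) ω) P := by
  have := hX.isProbabilityMeasure
  have _ (p : ι × κ) := Measure.isProbabilityMeasure_map (μ := P) (hm p).aemeasurable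
  have hrow (i : ι) :
      P.map (fun ω j => X (i, j) ω) = Measure.infinitePi fun j => P.map (X (i, j)) :=
    (hX.precomp (Prod.mk_right_injective i)).map_fun_eq_infinitePi_map fun j => hm (i, j)
  have hcurry :
      (fun ω i j => X (i, j) ω) = MeasurableEquiv.curry ι κ β ∘ fun ω p => X p ω := rfl
  rw [iIndepFun_iff_map_fun_eq_infinitePi_map (by fun_prop), hcurry,
    ← Measure.map_map (by fun_prop) (by fun_prop), hX.map_fun_eq_infinitePi_map hm]
  simp_rw [hrow]
  exact Measure.infinitePi_map_curry fun i j => P.map (X (i, j))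

lemma Fin.snoc_const_self {n : ℕ} {α : Type*} (x : α) :
    (Fin.snoc (fun _ => x) x : Fin (n + 1) → α) = fun _ => x := by
  ext t
  induction t using Fin.lastCases <;> simp

section DiagonalEstimator

variable {M d : ℕ}

def diagExponent (i : Fin d) (j : Fin M → Fin d) (q : Fin M × Fin d) : ℕ :=
  (if j q.1 = q.2 then 1 else 0) + if i = q.2 then 1 else 0

lemma prod_mul_eq_prod_pow_diagExponent {R : Type*} [CommMonoid R] (f : Fin M × Fin d → R)
    (i : Fin d) (j : Fin M → Fin d) :
    ∏ t, f (t, j t) * f (t, i) = ∏ q, f q ^ diagExponent i j q := by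
  simp only [diagExponent, Fintype.prod_prod_type, pow_add, pow_ite, pow_one, pow_zero,
    Finset.prod_mul_distrib, Finset.prod_ite_eq, Finset.mem_univ, if_true]

lemma forall_even_ite_add_ite_iff {α : Type*} [DecidableEq α] (a b : α) :
    (∀ x, Even ((if a = x then 1 else 0) + if b = x then 1 else 0)) ↔ a = b := by
  refine ⟨fun h => ?_, by rintro rfl x; exact Even.add_self _⟩
  by_contra hab
  have h_odd := h a
  rw [if_pos rfl, if_neg (Ne.symm hab)] at h_odd
  exact Nat.not_even_one h_odd

lemma forall_even_diagExponent_iff (i : Fin d) (j : Fin M → Fin d) :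
    (∀ q, Even (diagExponent i j q)) ↔ j = fun _ => i := by
  simp only [Prod.forall, diagExponent, forall_even_ite_add_ite_iff, funext_iff]

lemma forall_even_diagExponent_add_iff (i : Fin d) (j j' : Fin M → Fin d) :
    (∀ q, Even (diagExponent i j q + diagExponent i j' q)) ↔ j = j' := by
  have hsplit (q : Fin M × Fin d) : diagExponent i j q + diagExponent i j' q =
      ((if j q.1 = q.2 then 1 else 0) + if j' q.1 = q.2 then 1 else 0) +
        2 * if i = q.2 then 1 else 0 := by
    simp only [diagExponent]
    ring
  have hparity (m n : ℕ) : Even (m + 2 * n) ↔ Even m := by simp [Nat.even_add]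
  simp only [hsplit, hparity, Prod.forall, forall_even_ite_add_ite_iff, funext_iff]

variable {Ω : Type*} (a : (Fin (M + 1) → Fin d) → ℝ) (i : Fin d)
  {h : Fin M → Fin d → Ω → ℝ}

lemma diagEstimator_eq_sum_prod_pow (ω : Ω) : diagEstimator a h i ω =
    ∑ j, a (Fin.snoc j i) * ∏ q : Fin M × Fin d, h q.1 q.2 ω ^ diagExponent i j q := by
  simp only [diagEstimator, ← prod_mul_eq_prod_pow_diagExponent fun q => h q.1 q.2 ω]

lemma diagEstimator_sq_eq_sum_prod_pow (ω : Ω) : diagEstimator a h i ω ^ 2 =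
    ∑ j, ∑ j', a (Fin.snoc j i) * a (Fin.snoc j' i) *
      ∏ q : Fin M × Fin d, h q.1 q.2 ω ^ (diagExponent i j q + diagExponent i j' q) := by
  simp only [diagEstimator_eq_sum_prod_pow, sq, Finset.sum_mul_sum, pow_add,
    Finset.prod_mul_distrib]
  exact Finset.sum_congr rfl fun j _ => Finset.sum_congr rfl fun j' _ => by ring

variable [MeasurableSpace Ω] {P : Measure Ω}

lemma measurable_diagEstimator (hm : ∀ t x, Measurable (h t x)) :
    Measurable (diagEstimator a h i) := by
  unfold diagEstimator
  fun_prop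

section Sample

variable (hm : ∀ t x, Measurable (h t x)) (hlaw : ∀ t x, P.map (h t x) = radMeasure)
include hm hlaw

lemma memLp_diagEstimator [IsFiniteMeasure P] (p : ENNReal) :
    MemLp (diagEstimator a h i) p P := by
  have hmonomial (j : Fin M → Fin d) :=
    memLp_prod_pow (X := fun q : Fin M × Fin d => h q.1 q.2) (fun _ => hm _ _)
      (fun _ => hlaw _ _) (diagExponent i j) p
  rw [funext (diagEstimator_eq_sum_prod_pow a i)]
  exact memLp_finsetSum _ fun j _ => (hmonomial j).const_mul _

variable (hh : iIndepFun (fun q : Fin M × Fin d => h q.1 q.2) P)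
include hh

lemma integral_diagEstimator : ∫ ω, diagEstimator a h i ω ∂P = a (fun _ => i) := by
  have := hh.isProbabilityMeasure
  have hmonomial (e : Fin M × Fin d → ℕ) :=
    (memLp_prod_pow (X := fun q : Fin M × Fin d => h q.1 q.2) (fun _ => hm _ _)
      (fun _ => hlaw _ _) e 1).integrable le_rfl
  simp_rw [diagEstimator_eq_sum_prod_pow]
  rw [integral_finsetSum _ fun j _ => (hmonomial _).const_mul _]
  simp_rw [integral_const_mul, integral_prod_pow hh (fun _ => hm _ _) (fun _ => hlaw _ _),
    forall_even_diagExponent_iff, mul_ite, mul_one, mul_zero, Finset.sum_ite_eq',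
    Finset.mem_univ, if_true, Fin.snoc_const_self]

lemma integral_diagEstimator_sq :
    ∫ ω, diagEstimator a h i ω ^ 2 ∂P = ∑ j, a (Fin.snoc j i) ^ 2 := by
  have := hh.isProbabilityMeasure
  have hmonomial (e : Fin M × Fin d → ℕ) :=
    (memLp_prod_pow (X := fun q : Fin M × Fin d => h q.1 q.2) (fun _ => hm _ _)
      (fun _ => hlaw _ _) e 1).integrable le_rfl
  simp_rw [diagEstimator_sq_eq_sum_prod_pow]
  rw [integral_finsetSum _ fun j _ => integrable_finsetSum _ fun j' _ => (hmonomial _).const_mul _]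
  simp_rw [integral_finsetSum _ fun j' _ => (hmonomial _).const_mul _, integral_const_mul,
    integral_prod_pow hh (fun _ => hm _ _) (fun _ => hlaw _ _),
    forall_even_diagExponent_add_iff, mul_ite, mul_one, mul_zero, Finset.sum_ite_eq,
    Finset.mem_univ, if_true, sq]

lemma variance_diagEstimator :
    Var[diagEstimator a h i; P] = ∑ j, a (Fin.snoc j i) ^ 2 - a (fun _ => i) ^ 2 := by
  have := hh.isProbabilityMeasure
  rw [variance_eq_sub (memLp_diagEstimator a i hm hlaw 2), integral_diagEstimator a i hm hlaw hh]
  simp_rw [Pi.pow_apply, integral_diagEstimator_sq a i hm hlaw hh]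

end Sample

section Group

variable {s : ℕ} {g : Fin s → Fin M → Fin d → Ω → ℝ}
  (hm : ∀ l t x, Measurable (g l t x)) (hlaw : ∀ l t x, P.map (g l t x) = radMeasure)
  (hg : iIndepFun (fun p : Fin s × Fin M × Fin d => g p.1 p.2.1 p.2.2) P)
include hm hg

lemma iIndepFun_diagEstimator : iIndepFun (fun l => diagEstimator a (g l) i) P := by
  have hblocks : iIndepFun (fun l ω (q : Fin M × Fin d) => g l q.1 q.2 ω) P :=
    hg.curry fun _ => hm _ _ _
  convert hblocks.comp
    (fun _ z => diagEstimator a (fun t x (z : Fin M × Fin d → ℝ) => z (t, x)) i z)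
    fun _ => measurable_diagEstimator a i fun _ _ => measurable_pi_apply _ using 1
  ext l ω
  simp only [diagEstimator, Function.comp_apply]

include hlaw

lemma integral_mean_diagEstimator (hs : s ≠ 0) :
    P[fun ω => (1 / (s : ℝ)) * ∑ l, diagEstimator a (g l) i ω] = a (fun _ => i) := by
  have := hg.isProbabilityMeasure
  rw [integral_const_mul, integral_finsetSum _ fun l _ =>
    (memLp_diagEstimator a i (hm l) (hlaw l) 1).integrable le_rfl]
  simp_rw [integral_diagEstimator a i (hm _) (hlaw _) (hg.precomp (Prod.mk_right_injective _)),
    Finset.sum_const, Finset.card_univ, Fintype.card_fin, nsmul_eq_mul]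
  field_simp

lemma variance_mean_diagEstimator (hs : s ≠ 0) :
    Var[fun ω => (1 / (s : ℝ)) * ∑ l, diagEstimator a (g l) i ω; P] =
      (∑ j, a (Fin.snoc j i) ^ 2 - a (fun _ => i) ^ 2) / s := by
  have := hg.isProbabilityMeasure
  simp_rw [← Finset.sum_apply (g := fun l => diagEstimator a (g l) i)]
  rw [variance_const_mul, IndepFun.variance_sum
    (fun l _ => memLp_diagEstimator a i (hm l) (hlaw l) 2)
    fun _ _ _ _ hll' => (iIndepFun_diagEstimator a i hm hg).indepFun hll']
  simp_rw [variance_diagEstimator a i (hm _) (hlaw _) (hg.precomp (Prod.mk_right_injective _)),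
    Finset.sum_const, Finset.card_univ, Fintype.card_fin, nsmul_eq_mul]
  field_simp

lemma measureReal_lt_abs_mean_diagEstimator_sub_le (hs : s ≠ 0) {c : ℝ} (hc : 0 < c) :
    P.real {ω | c < |(1 / (s : ℝ)) * ∑ l, diagEstimator a (g l) i ω - a (fun _ => i)|} ≤
      (∑ j, a (Fin.snoc j i) ^ 2 - a (fun _ => i) ^ 2) / (s * c ^ 2) := by
  have := hg.isProbabilityMeasure
  have hY : MemLp (fun ω => (1 / (s : ℝ)) * ∑ l, diagEstimator a (g l) i ω) 2 P :=
    (memLp_finsetSum _ fun l _ => memLp_diagEstimator a i (hm l) (hlaw l) 2).const_mul _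
  calc P.real {ω | c < |(1 / (s : ℝ)) * ∑ l, diagEstimator a (g l) i ω - a (fun _ => i)|}
      ≤ P.real {ω | c ≤ |(1 / (s : ℝ)) * ∑ l, diagEstimator a (g l) i ω -
          P[fun ω => (1 / (s : ℝ)) * ∑ l, diagEstimator a (g l) i ω]|} :=
        measureReal_mono fun ω (hω : c < _) => show c ≤ _ by
          rw [integral_mean_diagEstimator a i hm hlaw hg hs]
          exact hω.le
    _ ≤ Var[fun ω => (1 / (s : ℝ)) * ∑ l, diagEstimator a (g l) i ω; P] / c ^ 2 :=
        ENNReal.toReal_le_of_le_ofReal (div_nonneg (variance_nonneg _ _) (sq_nonneg _))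
          (meas_ge_le_variance_div_sq hY hc)
    _ = (∑ j, a (Fin.snoc j i) ^ 2 - a (fun _ => i) ^ 2) / (s * c ^ 2) := by
        rw [variance_mean_diagEstimator a i hm hlaw hg hs, div_div]

end Group

end DiagonalEstimator
section Median

variable {r : ℕ}

lemma medianFn_eq_apply_sort (hr : r ≠ 0) (v : Fin r → ℝ) :
    medianFn v = v (Tuple.sort v ⟨(r - 1) / 2, by omega⟩) := by
  have hsorted : (List.ofFn v).mergeSort (fun x y => x ≤ y) = List.ofFn (v ∘ Tuple.sort v) :=
    ((List.mergeSort_perm _ _).trans ((Tuple.sort v).ofFn_comp_perm v).symm).eq_of_pairwise'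
      (List.pairwise_mergeSort' _ _) (List.sortedLE_ofFn_iff.2 (Tuple.monotone_sort v)).pairwise
  rw [medianFn, hsorted, List.getD_eq_getElem _ _ (by simp; omega), List.getElem_ofFn]
  rfl

lemma le_two_mul_card_le_medianFn (v : Fin r → ℝ) : r ≤ 2 * #{k | v k ≤ medianFn v} := by
  rcases eq_or_ne r 0 with rfl | hr
  · simp
  have hcount :
      #(Finset.Iic (⟨(r - 1) / 2, by omega⟩ : Fin r)) ≤ #{k | v k ≤ medianFn v} := by
    rw [medianFn_eq_apply_sort hr]
    refine Finset.card_le_card_of_injOn (Tuple.sort v) (fun q hq => ?_)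
      (Tuple.sort v).injective.injOn
    simpa using Tuple.monotone_sort v (Finset.mem_Iic.1 hq)
  rw [Fin.card_Iic, Fin.val_mk] at hcount
  omega

lemma le_two_mul_card_medianFn_le (v : Fin r → ℝ) : r ≤ 2 * #{k | medianFn v ≤ v k} := by
  rcases eq_or_ne r 0 with rfl | hr
  · simp
  have hcount :
      #(Finset.Ici (⟨(r - 1) / 2, by omega⟩ : Fin r)) ≤ #{k | medianFn v ≤ v k} := by
    rw [medianFn_eq_apply_sort hr]
    refine Finset.card_le_card_of_injOn (Tuple.sort v) (fun q hq => ?_)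
      (Tuple.sort v).injective.injOn
    simpa using Tuple.monotone_sort v (Finset.mem_Ici.1 hq)
  rw [Fin.card_Ici, Fin.val_mk] at hcount
  omega

lemma le_two_mul_card_of_lt_abs_medianFn_sub (v : Fin r → ℝ) {θ c : ℝ}
    (h : c < |medianFn v - θ|) : r ≤ 2 * #{k | c < |v k - θ|} := by
  rcases lt_abs.1 h with h | h
  · refine (le_two_mul_card_medianFn_le v).trans (Nat.mul_le_mul_left 2 (Finset.card_le_card ?_))
    intro k hk
    simp only [Finset.mem_filter, Finset.mem_univ, true_and] at hk ⊢
    exact h.trans_le ((sub_le_sub_right hk θ).trans (le_abs_self _))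
  · refine (le_two_mul_card_le_medianFn v).trans (Nat.mul_le_mul_left 2 (Finset.card_le_card ?_))
    intro k hk
    simp only [Finset.mem_filter, Finset.mem_univ, true_and] at hk ⊢
    exact h.trans_le ((neg_le_neg (sub_le_sub_right hk θ)).trans (neg_le_abs _))

end Median

lemma measureReal_card_le_two_mul_card_mem_le_exp {Ω ι β : Type*} [MeasurableSpace Ω]
    [MeasurableSpace β] [Fintype ι] {P : Measure Ω} {Y : ι → Ω → β} (hY : iIndepFun Y P)
    (hm : ∀ k, Measurable (Y k)) {B : Set β} [DecidablePred (· ∈ B)] (hB : MeasurableSet B)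
    (hp : ∀ k, P.real (Y k ⁻¹' B) ≤ 1 / 4) :
    P.real {ω | Fintype.card ι ≤ 2 * #{k | Y k ω ∈ B}} ≤
      Real.exp (-Fintype.card ι / 8) := by
  have := hY.isProbabilityMeasure
  have hind : Measurable (B.indicator (1 : β → ℝ)) := measurable_const.indicator hB
  have hX := hY.comp (fun k y => B.indicator 1 y - P.real (Y k ⁻¹' B)) fun k => hind.sub_const _
  have hsubG (k : ι) : HasSubgaussianMGF (fun ω => B.indicator 1 (Y k ω) - P.real (Y k ⁻¹' B))
      ((‖(1 : ℝ) - 0‖₊ / 2) ^ 2) P := by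
    rw [← integral_indicator_one (hm k hB)]
    exact hasSubgaussianMGF_of_mem_Icc (hind.comp (hm k)).aemeasurable
      (ae_of_all _ fun ω => ⟨Set.indicator_nonneg (fun _ _ => zero_le_one) _,
        Set.indicator_le_self' (fun _ _ => zero_le_one) _⟩)
  have hoeffding := HasSubgaussianMGF.measure_sum_ge_le_of_iIndepFun hX (s := Finset.univ)
    (fun k _ => hsubG k) (ε := Fintype.card ι / 4) (by positivity)
  have hexponent : -(Fintype.card ι / 4 : ℝ) ^ 2 /
      (2 * ((∑ _k : ι, (‖(1 : ℝ) - 0‖₊ / 2) ^ 2 : NNReal) : ℝ)) =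
        -Fintype.card ι / 8 := by
    rcases eq_or_ne (Fintype.card ι) 0 with hι | hι
    · simp [hι]
    · push_cast
      simp only [Finset.sum_const, Finset.card_univ, nsmul_eq_mul]
      field_simp
      norm_num
  rw [hexponent] at hoeffding
  refine (measureReal_mono fun ω (hω : Fintype.card ι ≤ 2 * #{k | Y k ω ∈ B}) => ?_).trans
    hoeffding
  have hmean : ∑ k, P.real (Y k ⁻¹' B) ≤ Fintype.card ι / 4 :=
    (Finset.sum_le_sum fun k _ => hp k).trans_eq (by simp [div_eq_mul_inv])
  have hcount : ∑ k, B.indicator 1 (Y k ω) = (#{k | Y k ω ∈ B} : ℝ) := by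
    simp only [Set.indicator_apply, Pi.one_apply, Finset.sum_boole]
  have hω' : (Fintype.card ι : ℝ) ≤ 2 * #{k | Y k ω ∈ B} := by exact_mod_cast hω
  simp only [Set.mem_ofPred_eq, Function.comp_apply, Finset.sum_sub_distrib, hcount]
  linarith

lemma one_sub_exp_le_measureReal_abs_medianFn_sub_le {Ω : Type*} [MeasurableSpace Ω]
    {P : Measure Ω} {r : ℕ} {Y : Fin r → Ω → ℝ} (hY : iIndepFun Y P)
    (hm : ∀ k, Measurable (Y k)) {θ c : ℝ} (hbad : ∀ k, P.real {ω | c < |Y k ω - θ|} ≤ 1 / 4) :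
    1 - Real.exp (-r / 8) ≤ P.real {ω | |medianFn (fun k => Y k ω) - θ| ≤ c} := by
  have := hY.isProbabilityMeasure
  have hhalf := measureReal_card_le_two_mul_card_mem_le_exp hY hm (B := {y | c < |y - θ|})
    (measurableSet_lt measurable_const (by fun_prop)) hbad
  rw [Fintype.card_fin] at hhalf
  have hbad_median : {ω | |medianFn (fun k => Y k ω) - θ| ≤ c}ᶜ ⊆
      {ω | r ≤ 2 * #{k | Y k ω ∈ {y | c < |y - θ|}}} :=
    fun ω hω => le_two_mul_card_of_lt_abs_medianFn_sub _ (not_le.1 hω)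
  -- subadditivity rather than `measureReal_compl`, which would need `medianFn` to be measurable
  have hcover := measureReal_union_le (μ := P) {ω | |medianFn (fun k => Y k ω) - θ| ≤ c}
    {ω | |medianFn (fun k => Y k ω) - θ| ≤ c}ᶜ
  rw [Set.union_compl_self, probReal_univ] at hcover
  linarith [measureReal_mono (μ := P) hbad_median]

theorem diag_median_of_means_rademacher_general
    {M d : ℕ}
    (a : (Fin (M + 1) → Fin d) → ℝ)
    {Ω : Type*} [MeasureSpace Ω] [IsProbabilityMeasure (ℙ : Measure Ω)]
    (r s : ℕ) (hs : 1 ≤ s)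
    (G : Fin r → Fin s → Fin M → Fin d → Ω → ℝ)
    (hmeas : ∀ k l n i, Measurable (G k l n i))
    (hindep : iIndepFun
      (fun p : Fin r × Fin s × Fin M × Fin d => G p.1 p.2.1 p.2.2.1 p.2.2.2) ℙ)
    (hdist : ∀ k l n i, Measure.map (G k l n i) ℙ = radMeasure)
    (i : Fin d) (hai : a (fun _ => i) ≠ 0)
    (ε δ : ℝ) (hε : 0 < ε) (hδ0 : 0 < δ)
    (hr : 8 * Real.log (1 / δ) ≤ (r : ℝ))
    (hs' : 4 * ((∑ j : Fin M → Fin d, (a (Fin.snoc j i)) ^ 2) - (a (fun _ => i)) ^ 2) / (ε ^ 2 * (a (fun _ => i)) ^ 2) ≤ (s : ℝ)) :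
    (1 : ℝ) - δ ≤
      (ℙ {ω | |medianFn (fun k : Fin r =>
          (1 / (s : ℝ)) * ∑ l : Fin s, diagEstimator a (G k l) i ω) - a (fun _ => i)| ≤
        ε * |a (fun _ => i)|}).toReal := by
  have hc : 0 < ε * |a (fun _ => i)| := mul_pos hε (abs_pos.2 hai)
  have hmean_meas (k : Fin r) :
      Measurable fun ω => (1 / (s : ℝ)) * ∑ l, diagEstimator a (G k l) i ω :=
    (Finset.measurable_sum _ fun l _ => measurable_diagEstimator a i (hmeas k l)).const_mul _
  have hgroups :
      iIndepFun (fun k ω => (1 / (s : ℝ)) * ∑ l, diagEstimator a (G k l) i ω) ℙ := by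
    convert (hindep.curry fun p => hmeas _ _ _ _).comp
      (fun _ z => (1 / (s : ℝ)) * ∑ l, diagEstimator a
        (fun t x (z : Fin s × Fin M × Fin d → ℝ) => z (l, t, x)) i z)
      (fun _ => (Finset.measurable_sum _ fun l _ =>
        measurable_diagEstimator a i fun t x => measurable_pi_apply _).const_mul _) using 1
    ext k ω
    simp only [diagEstimator, Function.comp_apply]
  have hbad (k : Fin r) : (ℙ : Measure Ω).real {ω | ε * |a (fun _ => i)| <
      |(1 / (s : ℝ)) * ∑ l, diagEstimator a (G k l) i ω - a (fun _ => i)|} ≤ 1 / 4 := by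
    refine (measureReal_lt_abs_mean_diagEstimator_sub_le a i (hmeas k) (hdist k)
      (hindep.precomp (Prod.mk_right_injective k)) (by omega) hc).trans ?_
    rw [div_le_iff₀ (by positivity)] at hs'
    rw [div_le_iff₀ (by positivity), mul_pow, sq_abs]
    linarith
  have hδ : Real.exp (-r / 8) ≤ δ := by
    rw [one_div, Real.log_inv] at hr
    exact (Real.exp_le_exp.2 (by linarith)).trans_eq (Real.exp_log hδ0)
  exact (sub_le_sub_left hδ 1).trans
    (one_sub_exp_le_measureReal_abs_medianFn_sub_le hgroups hmean_meas hbad)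

theorem diag_median_of_means_rademacher
    {M d : ℕ} (hM : 1 ≤ M) (hd : 1 ≤ d)
    (a : (Fin (M + 1) → Fin d) → ℝ)
    {Ω : Type*} [MeasureSpace Ω] [IsProbabilityMeasure (ℙ : Measure Ω)]
    (r s : ℕ) (hs : 1 ≤ s)
    (G : Fin r → Fin s → Fin M → Fin d → Ω → ℝ)
    (hmeas : ∀ k l n i, Measurable (G k l n i))
    (hindep : iIndepFun
      (fun p : Fin r × Fin s × Fin M × Fin d => G p.1 p.2.1 p.2.2.1 p.2.2.2) ℙ)
    (hdist : ∀ k l n i, Measure.map (G k l n i) ℙ = radMeasure)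
    (i : Fin d) (hai : a (fun _ => i) ≠ 0)
    (ε δ : ℝ) (hε : 0 < ε) (hδ0 : 0 < δ) (hδ1 : δ < 1)
    (hr : 8 * Real.log (1 / δ) ≤ (r : ℝ))
    (hs' : 4 * ((∑ j : Fin M → Fin d, (a (Fin.snoc j i)) ^ 2) - (a (fun _ => i)) ^ 2) / (ε ^ 2 * (a (fun _ => i)) ^ 2) ≤ (s : ℝ)) :
    (1 : ℝ) - δ ≤
      (ℙ {ω | |medianFn (fun k : Fin r =>
          (1 / (s : ℝ)) * ∑ l : Fin s, diagEstimator a (G k l) i ω) - a (fun _ => i)| ≤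
        ε * |a (fun _ => i)|}).toReal :=
  diag_median_of_means_rademacher_general a r s hs G hmeas hindep hdist i hai ε δ hε hδ0 hr hs'
end

section
/- The variance of the trace estimator equals Var(X) = Σ_{p=1}^d [ Σ_{s=0}^{N−1} (E[z⁴])^s · ( Σ a²_{j_1,…,j_{N−1},p} ) − a²_{p,…,p} ] + 2·Σ_{1 ≤ q < p ≤ d} [ Σ a_{j_1,…,j_{N−1},p} · a_{k_1,…,k_{N−1},q} − a_{p,…,p} · a_{q,…,q} ], where for each p and s the first inner sum ranges over all tuples (j_1,…,j_{N−1}) ∈ {1,…,d}^{N−1} in which exactly s of the indices j_t are equal to p; the second inner sum ranges over all pairs of tuples (j_1,…,j_{N−1}), (k_1,…,k_{N−1}) with every j_t and every k_t in {p,q} and j_t ≠ k_t for all t; and z is a random variable with the common distribution of the entries g^{(n)}_i. -/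
open MeasureTheory ProbabilityTheory Finset

/-- The trace estimator `X = Σ_i y_i`. -/
noncomputable def traceEstimator {M d : ℕ} (a : (Fin (M + 1) → Fin d) → ℝ)
    {Ω : Type*} (g : Fin M → Fin d → Ω → ℝ) (ω : Ω) : ℝ :=
  ∑ i : Fin d, diagEstimator a g i ω

/-!
Write `y_p = ∑_j a_{j,p} ∏_t g⁽ᵗ⁾_{j_t} g⁽ᵗ⁾_p`, so that `Var X = ∑_{p,q} cov(y_p, y_q)`.
Expanding `E[y_p y_q]`, every term is the expectation of a monomial in the independent
entries, which factors over the entries and hence over the rows `t`; row `t` contributes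
`E[g_{j_t} g_p g_{k_t} g_q]`. For independent centred entries of unit variance this is `E[z⁴]`
when the four indices agree, `1` when they split into two pairs of equal indices, and `0`
otherwise. For `p = q` this forces `k = j` and leaves `E[z⁴]^{#{t | j_t = p}}`; for `p ≠ q` it
forces `{j_t, k_t} = {p, q}` in every row.
-/

lemma sum_sum_eq_sum_add_two_mul_sum_Iio {ι R : Type*} [Fintype ι] [LinearOrder ι]
    [LocallyFiniteOrderBot ι] [LocallyFiniteOrderTop ι] [NonAssocSemiring R] (c : ι → ι → R)
    (hc : ∀ p q, c p q = c q p) :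
    ∑ p, ∑ q, c p q = ∑ p, c p p + 2 * ∑ p, ∑ q ∈ Iio p, c p q := by
  have hrow : ∀ p, ∑ q, c p q = ∑ q ∈ Iio p, c p q + (c p p + ∑ q ∈ Ioi p, c p q) := by
    intro p
    rw [← sum_filter_add_sum_filter_not univ (· < p), filter_gt_eq_Iio, add_sum_Ioi_eq_sum_Ici]
    congr 1
    exact sum_congr (by ext; simp) fun _ _ => rfl
  have hswap : ∑ p, ∑ q ∈ Ioi p, c p q = ∑ p, ∑ q ∈ Iio p, c p q := by
    rw [sum_comm' (t' := univ) (s' := Iio) (by simp)]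
    simp_rw [hc]
  simp only [hrow, sum_add_distrib, hswap]
  rw [two_mul]
  abel

section FourPointWeight

variable {α : Type*} [DecidableEq α] (μ4 : ℝ)

def fourPointWeight (a b c d : α) : ℝ :=
  if a = b ∧ b = c ∧ c = d then μ4
  else if (a = b ∧ c = d) ∨ (a = c ∧ b = d) ∨ (a = d ∧ b = c) then 1 else 0

lemma fourPointWeight_self (p b c : α) :
    fourPointWeight μ4 b p c p = if b = c then (if b = p then μ4 else 1) else 0 := by
  unfold fourPointWeight
  by_cases hbc : b = c <;> by_cases hbp : b = p <;> simp_all [eq_comm]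

lemma fourPointWeight_of_ne {p q : α} (hpq : p ≠ q) (b c : α) :
    fourPointWeight μ4 b p c q = if (b = p ∨ b = q) ∧ (c = p ∨ c = q) ∧ b ≠ c then 1 else 0 := by
  unfold fourPointWeight
  by_cases hbp : b = p <;> by_cases hbq : b = q <;> by_cases hcp : c = p <;>
    by_cases hcq : c = q <;> simp_all [eq_comm]

variable {M d : ℕ} (a : (Fin (M + 1) → Fin d) → ℝ)

lemma sum_prod_fourPointWeight_self (p : Fin d) :
    ∑ j, ∑ k, a (Fin.snoc j p) * a (Fin.snoc k p) * ∏ t, fourPointWeight μ4 (j t) p (k t) p =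
      ∑ s ∈ range (M + 1), μ4 ^ s * ∑ j with #{t | j t = p} = s, a (Fin.snoc j p) ^ 2 := by
  have hcount : ∀ j : Fin M → Fin d, ∏ t, (if j t = p then μ4 else 1) = μ4 ^ #{t | j t = p} :=
    fun j => by rw [prod_ite, prod_const, prod_const_one, mul_one]
  calc _ = ∑ j : Fin M → Fin d, μ4 ^ #{t | j t = p} * a (Fin.snoc j p) ^ 2 := by
        refine sum_congr rfl fun j _ => ?_
        simp only [fourPointWeight_self, Fintype.prod_ite_zero, ← funext_iff, mul_ite, mul_zero]
        simp [hcount, sq, mul_comm]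
    _ = _ := by
        rw [← sum_fiberwise_of_maps_to (t := range (M + 1)) (g := fun j => #{t | j t = p})
          fun j _ => mem_range.mpr (Nat.lt_succ_of_le ((card_filter_le _ _).trans (by simp)))]
        refine sum_congr rfl fun s _ => ?_
        rw [mul_sum]
        exact sum_congr rfl fun j hj => by rw [(mem_filter.mp hj).2]

lemma sum_prod_fourPointWeight_of_ne {p q : Fin d} (hpq : p ≠ q) :
    ∑ j, ∑ k, a (Fin.snoc j p) * a (Fin.snoc k q) * ∏ t, fourPointWeight μ4 (j t) p (k t) q =
      ∑ jk : (Fin M → Fin d) × (Fin M → Fin d) with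
          ∀ t, (jk.1 t = p ∨ jk.1 t = q) ∧ (jk.2 t = p ∨ jk.2 t = q) ∧ jk.1 t ≠ jk.2 t,
        a (Fin.snoc jk.1 p) * a (Fin.snoc jk.2 q) := by
  simp only [fourPointWeight_of_ne μ4 hpq, Fintype.prod_boole, mul_ite, mul_one, mul_zero]
  rw [sum_filter, Fintype.sum_prod_type]

end FourPointWeight

section MomentProducts

variable {α : Type*} [Fintype α] (m : α → ℕ → ℝ) (h0 : ∀ r, m r 0 = 1)
include h0

lemma prod_moment_eq_prod_of_support {e : α → ℕ} (s : Finset α) (hs : ∀ r ∉ s, e r = 0) :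
    ∏ r, m r (e r) = ∏ r ∈ s, m r (e r) :=
  (prod_subset (subset_univ s) fun r _ hr => by rw [hs r hr, h0]).symm

variable [DecidableEq α] (h1 : ∀ r, m r 1 = 0) (h2 : ∀ r, m r 2 = 1)
include h1 h2

lemma prod_moment_two (a b : α) :
    ∏ r, m r ((if a = r then 1 else 0) + (if b = r then 1 else 0)) = if a = b then 1 else 0 := by
  rw [prod_moment_eq_prod_of_support m h0 {a, b} fun r hr => by
    simp only [mem_insert, mem_singleton, not_or] at hr
    simp [Ne.symm hr.1, Ne.symm hr.2]]
  by_cases hab : a = b <;> simp_all [prod_insert, eq_comm]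

lemma prod_moment_four (a b c d : α) :
    ∏ r, m r ((if a = r then 1 else 0) + (if b = r then 1 else 0) +
      ((if c = r then 1 else 0) + (if d = r then 1 else 0))) =
      fourPointWeight (m a 4) a b c d := by
  rw [prod_moment_eq_prod_of_support m h0 {a, b, c, d} fun r hr => by
    simp only [mem_insert, mem_singleton, not_or] at hr
    simp [Ne.symm hr.1, Ne.symm hr.2.1, Ne.symm hr.2.2.1, Ne.symm hr.2.2.2]]
  unfold fourPointWeight
  by_cases hab : a = b <;> by_cases hac : a = c <;> by_cases had : a = d <;>
    by_cases hbc : b = c <;> by_cases hbd : b = d <;> by_cases hcd : c = d <;>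
    simp_all [prod_insert, eq_comm]

end MomentProducts

section Independence

variable {Ω ι : Type*} [MeasurableSpace Ω] {μ : Measure Ω}

lemma integrable_pow_of_le_of_even [IsFiniteMeasure μ] {X : Ω → ℝ}
    (hX : AEStronglyMeasurable X μ) {p q : ℕ} (hpq : p ≤ q) (hq : Even q)
    (hint : Integrable (fun ω => X ω ^ q) μ) : Integrable (fun ω => X ω ^ p) μ := by
  have hnorm := integrable_norm_pow_of_le hX hpq (by simpa [hq.pow_abs] using hint)
  exact (integrable_norm_iff (hX.pow p)).mp (by simpa using hnorm)

namespace ProbabilityTheory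

variable [Fintype ι] {f : ι → Ω → ℝ}

lemma iIndepFun.integrable_fun_prod (hf : iIndepFun f μ) (mf : ∀ i, Measurable (f i))
    (hint : ∀ i, Integrable (f i) μ) : Integrable (fun ω => ∏ i, f i ω) μ := by
  refine ⟨aestronglyMeasurable_fun_prod _ fun i _ => (hint i).1, ?_⟩
  simp only [HasFiniteIntegral, enorm_eq_nnnorm, nnnorm_prod, ENNReal.ofNNReal_finsetProd]
  rw [lintegral_prod_eq_prod_lintegral_of_indepFun _ (fun i ω => (‖f i ω‖₊ : ENNReal))
    (hf.comp (fun _ x => (‖x‖₊ : ENNReal)) fun _ => measurable_nnnorm.coe_nnreal_ennreal)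
    fun i => (mf i).nnnorm.coe_nnreal_ennreal]
  exact ENNReal.prod_lt_top fun i _ => (hint i).2

variable (hf : iIndepFun f μ) (mf : ∀ i, Measurable (f i)) (e : ι → ℕ)
include hf mf

lemma iIndepFun.integrable_fun_prod_pow (hint : ∀ i, Integrable (fun ω => f i ω ^ e i) μ) :
    Integrable (fun ω => ∏ i, f i ω ^ e i) μ :=
  (hf.comp (fun i x => x ^ e i) fun _ => measurable_id.pow_const _).integrable_fun_prod
    (fun i => (mf i).pow_const _) hint

lemma iIndepFun.integral_fun_prod_pow :
    ∫ ω, ∏ i, f i ω ^ e i ∂μ = ∏ i, moment (f i) (e i) μ :=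
  hf.integral_fun_prod_comp (fun i => (mf i).aemeasurable)
    fun i => (continuous_pow (e i)).aestronglyMeasurable

end ProbabilityTheory

end Independence

section Estimator

variable {M d : ℕ} (a : (Fin (M + 1) → Fin d) → ℝ) {Ω : Type*} (g : Fin M → Fin d → Ω → ℝ)

def monomialExponent (j : Fin M → Fin d) (i : Fin d) (x : Fin M × Fin d) : ℕ :=
  (if j x.1 = x.2 then 1 else 0) + (if i = x.2 then 1 else 0)

lemma monomialExponent_le_two (j : Fin M → Fin d) (i : Fin d) (x : Fin M × Fin d) :
    monomialExponent j i x ≤ 2 := by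
  unfold monomialExponent
  split_ifs <;> norm_num

lemma prod_mul_eq_prod_pow_monomialExponent (j : Fin M → Fin d) (i : Fin d) (ω : Ω) :
    ∏ t, g t (j t) ω * g t i ω = ∏ x : Fin M × Fin d, g x.1 x.2 ω ^ monomialExponent j i x := by
  simp only [Fintype.prod_prod_type, monomialExponent, pow_add, prod_mul_distrib, prod_pow_boole,
    mem_univ, if_true]

lemma diagEstimator_eq_sum_monomial (i : Fin d) (ω : Ω) :
    diagEstimator a g i ω =
      ∑ j, a (Fin.snoc j i) * ∏ x : Fin M × Fin d, g x.1 x.2 ω ^ monomialExponent j i x := by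
  simp only [diagEstimator, prod_mul_eq_prod_pow_monomialExponent]

variable [MeasureSpace Ω] [IsProbabilityMeasure (ℙ : Measure Ω)]
  {g} (hmeas : ∀ n i, Measurable (g n i))
  (hindep : iIndepFun (fun x : Fin M × Fin d => g x.1 x.2) ℙ)
  (hfourth : ∀ n i, Integrable (fun ω => (g n i ω) ^ 4) ℙ)
include hmeas hindep hfourth

lemma integrable_prod_pow_of_le_four (e : Fin M × Fin d → ℕ) (he : ∀ x, e x ≤ 4) :
    Integrable (fun ω => ∏ x : Fin M × Fin d, g x.1 x.2 ω ^ e x) ℙ :=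
  hindep.integrable_fun_prod_pow (fun x => hmeas x.1 x.2) e fun x =>
    integrable_pow_of_le_of_even (hmeas x.1 x.2).aestronglyMeasurable (he x) (by decide)
      (hfourth x.1 x.2)

lemma memLp_diagEstimator_s12 (i : Fin d) : MemLp (diagEstimator a g i) 2 ℙ := by
  have hsum : diagEstimator a g i = ∑ j, fun ω =>
      a (Fin.snoc j i) * ∏ x : Fin M × Fin d, g x.1 x.2 ω ^ monomialExponent j i x := by
    ext ω
    simp only [diagEstimator_eq_sum_monomial, Finset.sum_apply]
  rw [hsum]
  refine memLp_finsetSum' _ fun j _ => MemLp.const_mul ?_ _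
  refine (memLp_two_iff_integrable_sq ?_).mpr ?_
  · exact aestronglyMeasurable_fun_prod _ fun x _ =>
      ((hmeas x.1 x.2).pow_const _).aestronglyMeasurable
  simpa only [← prod_pow, ← pow_mul] using integrable_prod_pow_of_le_four hmeas hindep hfourth
    (fun x => monomialExponent j i x * 2) fun x => by
      have := monomialExponent_le_two j i x
      omega

variable (hmean : ∀ n i, ∫ ω, g n i ω ∂ℙ = 0) (hsecond : ∀ n i, ∫ ω, (g n i ω) ^ 2 ∂ℙ = 1)
include hmean hsecond

lemma integral_diagEstimator_s12 (p : Fin d) : ℙ[diagEstimator a g p] = a (fun _ => p) := by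
  have hrow : ∀ t (b c : Fin d), ∏ r, moment (g t r) ((if b = r then 1 else 0) +
      (if c = r then 1 else 0)) ℙ = if b = c then 1 else 0 := fun t =>
    prod_moment_two (fun r k => moment (g t r) k ℙ) (fun r => by simp [moment])
      (fun r => by simp [moment_one, hmean]) (fun r => by simpa [moment] using hsecond t r)
  have hsnoc : (Fin.snoc (fun _ => p) p : Fin (M + 1) → Fin d) = fun _ => p := by
    funext t
    simp [Fin.snoc]
  calc ℙ[diagEstimator a g p]
      = ∑ j, a (Fin.snoc j p) *
          ∏ x : Fin M × Fin d, moment (g x.1 x.2) (monomialExponent j p x) ℙ := by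
        simp_rw [diagEstimator_eq_sum_monomial]
        rw [integral_finsetSum _ fun j _ => (integrable_prod_pow_of_le_four hmeas hindep hfourth _
          fun x => (monomialExponent_le_two j p x).trans (by norm_num)).const_mul _]
        simp_rw [integral_const_mul, hindep.integral_fun_prod_pow (fun x => hmeas x.1 x.2)]
    _ = a (fun _ => p) := by
        simp only [Fintype.prod_prod_type, monomialExponent, hrow, Fintype.prod_boole]
        simp [← funext_iff, hsnoc]

variable {m4 : ℝ} (hm4 : ∀ n i, ∫ ω, (g n i ω) ^ 4 ∂ℙ = m4)
include hm4

lemma integral_diagEstimator_mul (p q : Fin d) :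
    ℙ[diagEstimator a g p * diagEstimator a g q] =
      ∑ j, ∑ k, a (Fin.snoc j p) * a (Fin.snoc k q) * ∏ t, fourPointWeight m4 (j t) p (k t) q := by
  have hrow : ∀ t (j k : Fin M → Fin d), ∏ r, moment (g t r)
      (monomialExponent j p (t, r) + monomialExponent k q (t, r)) ℙ =
        fourPointWeight m4 (j t) p (k t) q := fun t j k => by
    have h4 : moment (g t (j t)) 4 ℙ = m4 := by simpa [moment] using hm4 t (j t)
    rw [← h4]
    simp only [monomialExponent]
    exact prod_moment_four (fun r k => moment (g t r) k ℙ) (fun r => by simp [moment])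
      (fun r => by simp [moment_one, hmean]) (fun r => by simpa [moment] using hsecond t r) _ _ _ _
  have hprod : ∀ ω, diagEstimator a g p ω * diagEstimator a g q ω = ∑ j, ∑ k,
      a (Fin.snoc j p) * a (Fin.snoc k q) * ∏ x : Fin M × Fin d,
        g x.1 x.2 ω ^ (monomialExponent j p x + monomialExponent k q x) := fun ω => by
    simp only [diagEstimator_eq_sum_monomial, sum_mul_sum, pow_add, prod_mul_distrib]
    exact sum_congr rfl fun j _ => sum_congr rfl fun k _ => mul_mul_mul_comm _ _ _ _
  have hint : ∀ j k, Integrable (fun ω => ∏ x : Fin M × Fin d,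
      g x.1 x.2 ω ^ (monomialExponent j p x + monomialExponent k q x)) ℙ := fun j k =>
    integrable_prod_pow_of_le_four hmeas hindep hfourth _ fun x =>
      (add_le_add (monomialExponent_le_two j p x) (monomialExponent_le_two k q x)).trans
        (by norm_num)
  simp_rw [Pi.mul_apply, hprod]
  rw [integral_finsetSum _ fun j _ => integrable_finsetSum _ fun k _ => (hint j k).const_mul _]
  simp_rw [integral_finsetSum _ fun k _ => (hint _ k).const_mul _, integral_const_mul,
    hindep.integral_fun_prod_pow (fun x => hmeas x.1 x.2), Fintype.prod_prod_type, hrow]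

lemma covariance_diagEstimator_self (p : Fin d) :
    cov[diagEstimator a g p, diagEstimator a g p; ℙ] =
      ∑ s ∈ range (M + 1), m4 ^ s * (∑ j with #{t | j t = p} = s, a (Fin.snoc j p) ^ 2) -
        a (fun _ => p) ^ 2 := by
  have hp := memLp_diagEstimator_s12 a hmeas hindep hfourth p
  rw [covariance_eq_sub hp hp, integral_diagEstimator_mul a hmeas hindep hfourth hmean hsecond hm4,
    integral_diagEstimator_s12 a hmeas hindep hfourth hmean hsecond, sum_prod_fourPointWeight_self, sq]

lemma covariance_diagEstimator_of_ne {p q : Fin d} (hpq : p ≠ q) :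
    cov[diagEstimator a g p, diagEstimator a g q; ℙ] =
      ∑ jk : (Fin M → Fin d) × (Fin M → Fin d) with
          ∀ t, (jk.1 t = p ∨ jk.1 t = q) ∧ (jk.2 t = p ∨ jk.2 t = q) ∧ jk.1 t ≠ jk.2 t,
        a (Fin.snoc jk.1 p) * a (Fin.snoc jk.2 q) - a (fun _ => p) * a (fun _ => q) := by
  rw [covariance_eq_sub (memLp_diagEstimator_s12 a hmeas hindep hfourth p)
      (memLp_diagEstimator_s12 a hmeas hindep hfourth q),
    integral_diagEstimator_mul a hmeas hindep hfourth hmean hsecond hm4,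
    integral_diagEstimator_s12 a hmeas hindep hfourth hmean hsecond,
    integral_diagEstimator_s12 a hmeas hindep hfourth hmean hsecond,
    sum_prod_fourPointWeight_of_ne _ _ hpq]

end Estimator

theorem trace_estimator_variance_general
    {M d : ℕ}
    (a : (Fin (M + 1) → Fin d) → ℝ)
    {Ω : Type*} [MeasureSpace Ω] [IsProbabilityMeasure (ℙ : Measure Ω)]
    (g : Fin M → Fin d → Ω → ℝ)
    (hmeas : ∀ n i, Measurable (g n i))
    (hindep : iIndepFun (fun p : Fin M × Fin d => g p.1 p.2) ℙ)
    (hmean : ∀ n i, ∫ ω, g n i ω ∂ℙ = 0)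
    (hsecond : ∀ n i, ∫ ω, (g n i ω) ^ 2 ∂ℙ = 1)
    (hfourth : ∀ n i, Integrable (fun ω => (g n i ω) ^ 4) ℙ)
    (m4 : ℝ) (hm4 : ∀ n i, ∫ ω, (g n i ω) ^ 4 ∂ℙ = m4)
    :
    variance (traceEstimator a g) ℙ =
      (∑ p : Fin d,
        ((∑ s ∈ Finset.range (M + 1), m4 ^ s *
          (∑ j ∈ Finset.univ.filter (fun j : Fin M → Fin d =>
              (Finset.univ.filter (fun t => j t = p)).card = s), (a (Fin.snoc j p)) ^ 2)) -
          (a (fun _ => p)) ^ 2)) +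
      2 * ∑ p : Fin d, ∑ q ∈ Finset.Iio p,
        ((∑ jk ∈ Finset.univ.filter (fun jk : (Fin M → Fin d) × (Fin M → Fin d) =>
          ∀ t, (jk.1 t = p ∨ jk.1 t = q) ∧ (jk.2 t = p ∨ jk.2 t = q) ∧ jk.1 t ≠ jk.2 t),
        a (Fin.snoc jk.1 p) * a (Fin.snoc jk.2 q)) -
          a (fun _ => p) * a (fun _ => q)) := by
  change variance (fun ω => ∑ i, diagEstimator a g i ω) ℙ = _
  rw [variance_fun_sum (memLp_diagEstimator_s12 a hmeas hindep hfourth),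
    sum_sum_eq_sum_add_two_mul_sum_Iio _ fun p q => covariance_comm _ _]
  congr 1
  · exact sum_congr rfl fun p _ =>
      covariance_diagEstimator_self a hmeas hindep hfourth hmean hsecond hm4 p
  · congr 1
    exact sum_congr rfl fun p _ => sum_congr rfl fun q hq =>
      covariance_diagEstimator_of_ne a hmeas hindep hfourth hmean hsecond hm4 (mem_Iio.mp hq).ne'

theorem trace_estimator_variance
    {M d : ℕ} (hM : 1 ≤ M) (hd : 1 ≤ d)
    (a : (Fin (M + 1) → Fin d) → ℝ)
    {Ω : Type*} [MeasureSpace Ω] [IsProbabilityMeasure (ℙ : Measure Ω)]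
    (g : Fin M → Fin d → Ω → ℝ)
    (hmeas : ∀ n i, Measurable (g n i))
    (hindep : iIndepFun (fun p : Fin M × Fin d => g p.1 p.2) ℙ)
    (hident : ∀ n i n' i', IdentDistrib (g n i) (g n' i') ℙ ℙ)
    (hmean : ∀ n i, ∫ ω, g n i ω ∂ℙ = 0)
    (hsecond : ∀ n i, ∫ ω, (g n i ω) ^ 2 ∂ℙ = 1)
    (hfourth : ∀ n i, Integrable (fun ω => (g n i ω) ^ 4) ℙ)
    (m4 : ℝ) (hm4 : ∀ n i, ∫ ω, (g n i ω) ^ 4 ∂ℙ = m4)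
    :
    variance (traceEstimator a g) ℙ =
      (∑ p : Fin d,
        ((∑ s ∈ Finset.range (M + 1), m4 ^ s *
          (∑ j ∈ Finset.univ.filter (fun j : Fin M → Fin d =>
              (Finset.univ.filter (fun t => j t = p)).card = s), (a (Fin.snoc j p)) ^ 2)) -
          (a (fun _ => p)) ^ 2)) +
      2 * ∑ p : Fin d, ∑ q ∈ Finset.Iio p,
        ((∑ jk ∈ Finset.univ.filter (fun jk : (Fin M → Fin d) × (Fin M → Fin d) =>
          ∀ t, (jk.1 t = p ∨ jk.1 t = q) ∧ (jk.2 t = p ∨ jk.2 t = q) ∧ jk.1 t ≠ jk.2 t),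
        a (Fin.snoc jk.1 p) * a (Fin.snoc jk.2 q)) -
          a (fun _ => p) * a (fun _ => q)) :=
  trace_estimator_variance_general a g hmeas hindep hmean hsecond hfourth m4 hm4
end
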